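/- arXiv:2312.10500 — 5 statements merged into one kernel-verified Lean document; each statement's English description precedes it below -/
import Mathlib

section
/- Let d ∈ ℕ and let λ, μ ∈ ℕ^n be partitions of d (padded with zeros to length n, with n ≥ the number of nonzero parts of μ) such that λ dominates μ in the dominance order (λ ⪰ μ). Then the symmetric signomial g(y) = Σ_{σ∈S_n} exp(⟨σ(λ), y⟩) − Σ_{σ∈S_n} exp(⟨σ(μ), y⟩) belongs to the SAGE cone C_SAGE(S_n·λ ∪ S_n·μ). In particular, m_λ^{(n)}(x) ≥ m_μ^{(n)}(x) for all x ∈ ℝ_{>0}^n (Muirhead's inequality admits a SAGE certificate). -/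
open Finset

noncomputable def dotp {n : ℕ} (a x : Fin n → ℝ) : ℝ := ∑ i, a i * x i

noncomputable def monom {n : ℕ} (α : Fin n → ℕ) (x : Fin n → ℝ) : ℝ := ∏ i, x i ^ α i

/-- The AGE cone `C_AGE(A, β)`: nonnegative signomials supported on `A ∪ {β}` whose
coefficients on `A` are nonnegative (only the `β`-term may be negative). -/
def IsAGE {n : ℕ} (A : Finset (Fin n → ℝ)) (β : Fin n → ℝ) (f : (Fin n → ℝ) → ℝ) : Prop :=
  ∃ c : (Fin n → ℝ) → ℝ, (∀ α ∈ A, 0 ≤ c α) ∧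
    (∀ x, f x = (∑ α ∈ A, c α * Real.exp (dotp α x)) + c β * Real.exp (dotp β x)) ∧
    (∀ x, 0 ≤ f x)

/-- The SAGE cone `C_SAGE(T) = Σ_{β ∈ T} C_AGE(T \ {β}, β)`. -/
def IsSAGE {n : ℕ} (T : Finset (Fin n → ℝ)) (f : (Fin n → ℝ) → ℝ) : Prop :=
  ∃ g : (Fin n → ℝ) → ((Fin n → ℝ) → ℝ),
    (∀ β ∈ T, IsAGE (T.erase β) β (g β)) ∧ (∀ x, f x = ∑ β ∈ T, g β x)

/-- `f^SAGE = sup {l : f - l ∈ C_SAGE(T ∪ {0})}`, as an extended real number. -/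
noncomputable def sageBound {n : ℕ} (T : Finset (Fin n → ℝ)) (f : (Fin n → ℝ) → ℝ) : EReal :=
  sSup ((fun l : ℝ => (l : EReal)) '' {l : ℝ | IsSAGE (insert 0 T) (fun x => f x - l)})

/-- `f* = inf_{x ∈ ℝⁿ} f(x)`, as an extended real number. -/
noncomputable def infStar {n : ℕ} (f : (Fin n → ℝ) → ℝ) : EReal := ⨅ x, (f x : EReal)

/-- The AG cone `C_AG(A, β)` of nonnegative polynomials with nonnegative coefficients
on `A`, vanishing coefficients on non-even points of `A`, and possibly negative
coefficient on `β`. -/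
def IsAG {n : ℕ} (A : Finset (Fin n → ℕ)) (β : Fin n → ℕ) (f : (Fin n → ℝ) → ℝ) : Prop :=
  ∃ c : (Fin n → ℕ) → ℝ, (∀ α ∈ A, 0 ≤ c α) ∧
    (∀ γ ∈ A, (¬ ∀ i, Even (γ i)) → c γ = 0) ∧
    (∀ x, f x = (∑ α ∈ A, c α * monom α x) + c β * monom β x) ∧
    (∀ x, 0 ≤ f x)

/-- The SONC cone `C_SONC(T) = Σ_{β ∈ T} C_AG(T \ {β}, β)`. -/
def IsSONC {n : ℕ} (T : Finset (Fin n → ℕ)) (f : (Fin n → ℝ) → ℝ) : Prop :=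
  ∃ g : (Fin n → ℕ) → ((Fin n → ℝ) → ℝ),
    (∀ β ∈ T, IsAG (T.erase β) β (g β)) ∧ (∀ x, f x = ∑ β ∈ T, g β x)

/-- `f^SONC = sup {l : f - l ∈ C_SONC(T ∪ {0})}`, as an extended real number. -/
noncomputable def soncBound {n : ℕ} (T : Finset (Fin n → ℕ)) (f : (Fin n → ℝ) → ℝ) : EReal :=
  sSup ((fun l : ℝ => (l : EReal)) '' {l : ℝ | IsSONC (insert 0 T) (fun x => f x - l)})

/-- Action of a permutation on a real vector: `(σ·x) i = x (σ⁻¹ i)`. -/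
def permAct {n : ℕ} (σ : Equiv.Perm (Fin n)) (x : Fin n → ℝ) : Fin n → ℝ := fun i => x (σ⁻¹ i)

/-- Action of a permutation on an exponent vector. -/
def permActN {m : ℕ} (σ : Equiv.Perm (Fin m)) (x : Fin m → ℕ) : Fin m → ℕ := fun i => x (σ⁻¹ i)

/-- The orbit of a vector under the symmetric group, as a finite set. -/
noncomputable def orbitF {n : ℕ} (v : Fin n → ℝ) : Finset (Fin n → ℝ) :=
  Finset.univ.image (fun σ : Equiv.Perm (Fin n) => permAct σ v)

/-- The monomial mean `m_α^{(m)}(x) = (1/m!) Σ_{σ ∈ S_m} x^{σ(α)}`. -/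
noncomputable def mmean {m : ℕ} (α : Fin m → ℕ) (x : Fin m → ℝ) : ℝ :=
  (1/(m.factorial : ℝ)) * ∑ σ : Equiv.Perm (Fin m), monom (permActN σ α) x

/-!
Muirhead's inequality via Robin Hood transfers: if `lam` dominates the sorted vector `mu`
with the same total, then moving mass `c` from an index `i` with `mu i < lam i` to a later
index `j` with `lam j < mu j` keeps the dominance, lands in the segment between `lam` and
its transposition `lam ∘ (i j)`, and makes one more coordinate agree with `mu`. Hence `mu`
is a convex combination `∑ w α • α` of points of the orbit of `lam`. For each permutation
`σ`, Jensen's inequality for `exp` makes `∑ α, w α e^{⟨σα, y⟩} - e^{⟨σmu, y⟩}` an AGE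
signomial, and summing over `σ` gives `g`, since every point of the orbit of `lam` has the
same orbit sum.
-/

open Real

section SAGE

variable {n : ℕ}

lemma dotp_sum_smul {ι : Type*} (s : Finset ι) (w : ι → ℝ) (p : ι → Fin n → ℝ)
    (x : Fin n → ℝ) : dotp (∑ i ∈ s, w i • p i) x = ∑ i ∈ s, w i * dotp (p i) x := by
  simp only [dotp, Finset.sum_apply, Pi.smul_apply, smul_eq_mul, Finset.sum_mul,
    Finset.mul_sum, mul_assoc]
  exact Finset.sum_comm

namespace IsAGE

variable {A : Finset (Fin n → ℝ)} {β : Fin n → ℝ}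

lemma zero : IsAGE A β 0 :=
  ⟨0, fun _ _ => le_rfl, fun x => by simp, fun _ => le_rfl⟩

lemma add {f g : (Fin n → ℝ) → ℝ} (hf : IsAGE A β f) (hg : IsAGE A β g) :
    IsAGE A β (f + g) := by
  obtain ⟨c, hc, hfc, hf0⟩ := hf
  obtain ⟨d, hd, hgd, hg0⟩ := hg
  refine ⟨c + d, fun α hα => add_nonneg (hc α hα) (hd α hα), fun x => ?_,
    fun x => add_nonneg (hf0 x) (hg0 x)⟩
  simp only [Pi.add_apply, hfc, hgd, add_mul, Finset.sum_add_distrib]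
  ring

lemma sum {ι : Type*} (s : Finset ι) (f : ι → (Fin n → ℝ) → ℝ)
    (hf : ∀ i ∈ s, IsAGE A β (f i)) : IsAGE A β (∑ i ∈ s, f i) :=
  Finset.sum_induction f _ (fun _ _ => add) zero hf

end IsAGE

lemma IsSAGE.nonneg {T : Finset (Fin n → ℝ)} {f : (Fin n → ℝ) → ℝ} (hf : IsSAGE T f)
    (x : Fin n → ℝ) : 0 ≤ f x := by
  obtain ⟨g, hg, hfg⟩ := hf
  rw [hfg]
  refine Finset.sum_nonneg fun β hβ => ?_
  obtain ⟨-, -, -, hβx⟩ := hg β hβ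
  exact hβx x

lemma isSAGE_sum {ι : Type*} {T : Finset (Fin n → ℝ)} (s : Finset ι) (β : ι → Fin n → ℝ)
    (hβ : ∀ i ∈ s, β i ∈ T) (f : ι → (Fin n → ℝ) → ℝ)
    (hf : ∀ i ∈ s, IsAGE (T.erase (β i)) (β i) (f i)) : IsSAGE T (∑ i ∈ s, f i) := by
  classical
  -- group the summands by their negative term
  refine ⟨fun b => ∑ i ∈ s with β i = b, f i, fun b _ => IsAGE.sum _ _ fun i hi => ?_,
    fun x => ?_⟩
  · obtain ⟨his, rfl⟩ := Finset.mem_filter.1 hi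
    exact hf i his
  · simp only [Finset.sum_apply]
    exact (Finset.sum_fiberwise_of_maps_to hβ _).symm

lemma isAGE_sum_exp_sub_exp {ι : Type*} {T : Finset (Fin n → ℝ)} {β : Fin n → ℝ}
    (hβ : β ∈ T) (s : Finset ι) (p : ι → Fin n → ℝ) (hp : ∀ i ∈ s, p i ∈ T) (w : ι → ℝ)
    (hw0 : ∀ i ∈ s, 0 ≤ w i) (hw1 : ∑ i ∈ s, w i = 1) (hwβ : ∑ i ∈ s, w i • p i = β) :
    IsAGE (T.erase β) β (fun x => ∑ i ∈ s, w i * exp (dotp (p i) x) - exp (dotp β x)) := by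
  classical
  refine ⟨fun α => (∑ i ∈ s with p i = α, w i) - if α = β then 1 else 0,
    fun α hα => ?_, fun x => ?_, fun x => ?_⟩
  · simp only [if_neg (Finset.ne_of_mem_erase hα), sub_zero]
    exact Finset.sum_nonneg fun i hi => hw0 i (Finset.mem_filter.1 hi).1
  · rw [Finset.sum_erase_add _ _ hβ]
    simp only [sub_mul, Finset.sum_sub_distrib, ite_mul, one_mul, zero_mul,
      Finset.sum_ite_eq', if_pos hβ, Finset.sum_mul]
    congr 1
    rw [← Finset.sum_fiberwise_of_maps_to hp]
    refine Finset.sum_congr rfl fun α _ => Finset.sum_congr rfl fun i hi => ?_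
    rw [(Finset.mem_filter.1 hi).2]
  · rw [sub_nonneg, ← hwβ, dotp_sum_smul]
    simpa using convexOn_exp.map_sum_le hw0 hw1 (fun _ _ => Set.mem_univ _)

end SAGE

section Orbit

variable {n : ℕ}

lemma permAct_mul (σ τ : Equiv.Perm (Fin n)) (v : Fin n → ℝ) :
    permAct (σ * τ) v = permAct σ (permAct τ v) := by
  ext i
  simp [permAct, mul_inv_rev]

lemma permAct_sum_smul {ι : Type*} (σ : Equiv.Perm (Fin n)) (s : Finset ι) (w : ι → ℝ)
    (p : ι → Fin n → ℝ) : permAct σ (∑ i ∈ s, w i • p i) = ∑ i ∈ s, w i • permAct σ (p i) := by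
  ext k
  simp [permAct, Finset.sum_apply]

lemma permAct_mem_orbitF_self (σ : Equiv.Perm (Fin n)) (v : Fin n → ℝ) :
    permAct σ v ∈ orbitF v :=
  Finset.mem_image_of_mem _ (Finset.mem_univ σ)

lemma mem_orbitF_self (v : Fin n → ℝ) : v ∈ orbitF v := by
  convert permAct_mem_orbitF_self 1 v
  ext
  simp [permAct]

lemma permAct_mem_orbitF {v w : Fin n → ℝ} (σ : Equiv.Perm (Fin n)) (hw : w ∈ orbitF v) :
    permAct σ w ∈ orbitF v := by
  obtain ⟨τ, -, rfl⟩ := Finset.mem_image.1 hw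
  rw [← permAct_mul]
  exact permAct_mem_orbitF_self _ v

lemma sum_permAct_of_mem_orbitF {M : Type*} [AddCommMonoid M] {v w : Fin n → ℝ}
    (hw : w ∈ orbitF v) (F : (Fin n → ℝ) → M) :
    ∑ σ, F (permAct σ w) = ∑ σ, F (permAct σ v) := by
  obtain ⟨τ, -, rfl⟩ := Finset.mem_image.1 hw
  simp only [← permAct_mul]
  exact Fintype.sum_equiv (Equiv.mulRight τ) _ _ fun _ => rfl

lemma convexHull_orbitF_subset {v w : Fin n → ℝ}
    (hw : w ∈ convexHull ℝ (orbitF v : Set (Fin n → ℝ))) :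
    convexHull ℝ (orbitF w : Set (Fin n → ℝ)) ⊆ convexHull ℝ (orbitF v : Set (Fin n → ℝ)) := by
  refine convexHull_min ?_ (convex_convexHull ℝ _)
  intro u hu
  obtain ⟨σ, -, rfl⟩ := Finset.mem_image.1 hu
  obtain ⟨c, hc0, hc1, rfl⟩ := Finset.mem_convexHull'.1 hw
  rw [permAct_sum_smul]
  exact (convex_convexHull ℝ _).sum_mem hc0 hc1
    fun α hα => subset_convexHull ℝ _ (permAct_mem_orbitF σ hα)

lemma transfer_mem_segment (v : Fin n → ℝ) {i j : Fin n} (hij : i ≠ j) {c : ℝ} (hc0 : 0 ≤ c)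
    (hc : c ≤ v i - v j) :
    v - Pi.single i c + Pi.single j c ∈ segment ℝ v (permAct (Equiv.swap i j) v) := by
  have hd : 0 ≤ v i - v j := hc0.trans hc
  obtain ⟨t, ht0, ht1, htc⟩ : ∃ t : ℝ, 0 ≤ t ∧ t ≤ 1 ∧ t * (v i - v j) = c := by
    rcases hd.eq_or_lt with h | h
    · exact ⟨0, le_rfl, zero_le_one, by rw [zero_mul]; linarith⟩
    · exact ⟨c / (v i - v j), div_nonneg hc0 hd, (div_le_one h).2 hc, div_mul_cancel₀ _ h.ne'⟩
  refine ⟨1 - t, t, by linarith, ht0, by ring, ?_⟩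
  ext k
  simp only [Pi.add_apply, Pi.sub_apply, Pi.smul_apply, smul_eq_mul, permAct, Equiv.swap_inv]
  by_cases hki : k = i
  · subst hki
    rw [Equiv.swap_apply_left, Pi.single_eq_same, Pi.single_eq_of_ne hij]
    linarith
  by_cases hkj : k = j
  · subst hkj
    rw [Equiv.swap_apply_right, Pi.single_eq_same, Pi.single_eq_of_ne (Ne.symm hij)]
    linarith
  · rw [Equiv.swap_apply_of_ne_of_ne hki hkj, Pi.single_eq_of_ne hki, Pi.single_eq_of_ne hkj]
    ring

end Orbit

section Majorization

variable {n : ℕ}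

def prefixSum (v : Fin n → ℝ) (k : ℕ) : ℝ :=
  ∑ i ∈ Finset.univ.filter (fun i : Fin n => (i : ℕ) < k), v i

lemma prefixSum_transfer (v : Fin n → ℝ) (i j : Fin n) (c : ℝ) (k : ℕ) :
    prefixSum (v - Pi.single i c + Pi.single j c) k
      = prefixSum v k - (if (i : ℕ) < k then c else 0) + (if (j : ℕ) < k then c else 0) := by
  simp [prefixSum, Finset.sum_add_distrib, Finset.sum_sub_distrib, Finset.sum_pi_single']

lemma exists_transfer_indices {lam mu : Fin n → ℝ} (hsum : ∑ i, lam i = ∑ i, mu i)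
    (hdom : ∀ k, prefixSum mu k ≤ prefixSum lam k) (hne : lam ≠ mu) :
    ∃ i j, i < j ∧ mu i < lam i ∧ lam j < mu j ∧ ∀ k < j, mu k ≤ lam k := by
  classical
  have hS : (Finset.univ.filter fun j => lam j < mu j).Nonempty := by
    by_contra h
    simp only [Finset.not_nonempty_iff_eq_empty, Finset.filter_eq_empty_iff, not_lt] at h
    obtain ⟨k, hk⟩ := Function.ne_iff.1 hne
    have := Finset.sum_lt_sum (fun i _ => h (Finset.mem_univ i))
      ⟨k, Finset.mem_univ k, lt_of_le_of_ne (h (Finset.mem_univ k)) (Ne.symm hk)⟩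
    linarith
  set j := (Finset.univ.filter fun j => lam j < mu j).min' hS
  have hj : lam j < mu j := (Finset.mem_filter.1 (Finset.min'_mem _ hS)).2
  have hbefore : ∀ k < j, mu k ≤ lam k := fun k hk => not_lt.1 fun h =>
    (Finset.min'_le _ k (Finset.mem_filter.2 ⟨Finset.mem_univ k, h⟩)).not_gt hk
  suffices ∃ i < j, mu i < lam i from
    let ⟨i, hij, hi⟩ := this; ⟨i, j, hij, hi, hj, hbefore⟩
  by_contra! h
  have := Finset.sum_lt_sum (s := Finset.univ.filter fun i : Fin n => (i : ℕ) < j + 1)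
    (f := lam) (g := mu) (fun i hi => ?_) ⟨j, by simp, hj⟩
  · exact (hdom (j + 1)).not_gt this
  · rcases (Nat.lt_succ_iff.1 (Finset.mem_filter.1 hi).2).lt_or_eq with hij | hij
    · exact h i (Fin.lt_def.2 hij)
    · exact (Fin.ext hij ▸ hj).le

lemma card_filter_transfer_ne_lt {lam mu : Fin n → ℝ} {i j : Fin n} (hij : i ≠ j)
    (hi : lam i ≠ mu i) (hj : lam j ≠ mu j) {c : ℝ}
    (hc : c = lam i - mu i ∨ c = mu j - lam j) :
    #{k | (lam - Pi.single i c + Pi.single j c : Fin n → ℝ) k ≠ mu k}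
      < #{k | lam k ≠ mu k} := by
  classical
  have hval : ∀ k, k ≠ i → k ≠ j →
      (lam - Pi.single i c + Pi.single j c : Fin n → ℝ) k = lam k :=
    fun k hki hkj => by simp [hki, hkj]
  refine Finset.card_lt_card ((Finset.ssubset_iff_of_subset fun k hk => ?_).2 ?_)
  · simp only [Finset.mem_filter, Finset.mem_univ, true_and] at hk ⊢
    by_cases hki : k = i
    · exact hki ▸ hi
    by_cases hkj : k = j
    · exact hkj ▸ hj
    · rwa [← hval k hki hkj]
  · rcases hc with rfl | rfl
    · exact ⟨i, by simpa using hi, by simp [Pi.single_apply, hij]⟩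
    · exact ⟨j, by simpa using hj, by simp [Pi.single_apply, Ne.symm hij]⟩

/-- Rado's theorem. -/
theorem mem_convexHull_orbitF_of_prefixSum_le {mu : Fin n → ℝ} (hmu : Antitone mu)
    {lam : Fin n → ℝ} (hsum : ∑ i, lam i = ∑ i, mu i)
    (hdom : ∀ k, prefixSum mu k ≤ prefixSum lam k) :
    mu ∈ convexHull ℝ (orbitF lam : Set (Fin n → ℝ)) := by
  classical
  induction hN : #{k | lam k ≠ mu k} using Nat.strong_induction_on generalizing lam with
  | _ N ih =>
  by_cases heq : lam = mu
  · exact heq ▸ subset_convexHull ℝ _ (mem_orbitF_self lam)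
  obtain ⟨i, j, hij, hi, hj, hbefore⟩ := exists_transfer_indices hsum hdom heq
  set c := min (lam i - mu i) (mu j - lam j)
  have hc0 : 0 ≤ c := le_min (by linarith) (by linarith)
  have hci : c ≤ lam i - mu i := min_le_left _ _
  have hcj : c ≤ mu j - lam j := min_le_right _ _
  have hmij : mu j ≤ mu i := hmu hij.le
  have hseg :
      lam - Pi.single i c + Pi.single j c ∈ convexHull ℝ (orbitF lam : Set (Fin n → ℝ)) :=
    segment_subset_convexHull (mem_orbitF_self lam) (permAct_mem_orbitF_self _ lam)
      (transfer_mem_segment lam hij.ne hc0 (by linarith))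
  refine convexHull_orbitF_subset hseg (ih _ ?_ ?_ (fun k => ?_) rfl)
  · exact hN ▸ card_filter_transfer_ne_lt hij.ne hi.ne' hj.ne (min_choice _ _)
  · simpa [Finset.sum_add_distrib, Finset.sum_sub_distrib, Finset.sum_pi_single'] using hsum
  · rw [prefixSum_transfer]
    by_cases hik : (i : ℕ) < k
    · by_cases hjk : (j : ℕ) < k
      · simpa [hik, hjk] using hdom k
      · have hgap : lam i - mu i ≤ prefixSum lam k - prefixSum mu k := by
          rw [prefixSum, prefixSum, ← Finset.sum_sub_distrib]
          exact Finset.single_le_sum (f := fun k => lam k - mu k)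
            (fun l hl => sub_nonneg.2 (hbefore l (Fin.lt_def.2
              (lt_of_lt_of_le (Finset.mem_filter.1 hl).2 (not_lt.1 hjk)))))
            (Finset.mem_filter.2 ⟨Finset.mem_univ i, hik⟩)
        simp only [hik, hjk, if_true, if_false]
        linarith
    · have hjk : ¬ (j : ℕ) < k := fun h => hik (lt_trans (Fin.lt_def.1 hij) h)
      simpa [hik, hjk] using hdom k

end Majorization

theorem isSAGE_sum_exp_orbitF_sub_of_mem_convexHull {n : ℕ} {lam mu : Fin n → ℝ}
    (h : mu ∈ convexHull ℝ (orbitF lam : Set (Fin n → ℝ))) :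
    IsSAGE (orbitF lam ∪ orbitF mu)
      (fun y => ∑ σ, exp (dotp (permAct σ lam) y) - ∑ σ, exp (dotp (permAct σ mu) y)) := by
  classical
  obtain ⟨w, hw0, hw1, hwmu⟩ := Finset.mem_convexHull'.1 h
  have hAGE : ∀ σ ∈ (Finset.univ : Finset (Equiv.Perm (Fin n))),
      IsAGE ((orbitF lam ∪ orbitF mu).erase (permAct σ mu)) (permAct σ mu)
        (fun y => ∑ α ∈ orbitF lam, w α * exp (dotp (permAct σ α) y)
          - exp (dotp (permAct σ mu) y)) := fun σ _ =>
    isAGE_sum_exp_sub_exp (Finset.mem_union_right _ (permAct_mem_orbitF_self σ mu)) _ _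
      (fun α hα => Finset.mem_union_left _ (permAct_mem_orbitF σ hα)) w hw0 hw1
      (by rw [← hwmu, permAct_sum_smul])
  convert isSAGE_sum _ _ (fun σ _ => Finset.mem_union_right _ (permAct_mem_orbitF_self σ mu))
    _ hAGE using 1
  funext y
  simp only [Finset.sum_apply, Finset.sum_sub_distrib]
  congr 1
  calc ∑ σ, exp (dotp (permAct σ lam) y)
      = ∑ α ∈ orbitF lam, w α * ∑ σ, exp (dotp (permAct σ lam) y) := by
        rw [← Finset.sum_mul, hw1, one_mul]
    _ = ∑ α ∈ orbitF lam, w α * ∑ σ, exp (dotp (permAct σ α) y) :=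
        Finset.sum_congr rfl fun α hα => by
          rw [sum_permAct_of_mem_orbitF hα fun v => exp (dotp v y)]
    _ = ∑ σ, ∑ α ∈ orbitF lam, w α * exp (dotp (permAct σ α) y) := by
        simp only [Finset.mul_sum]
        exact Finset.sum_comm

lemma monom_eq_exp_dotp {n : ℕ} (α : Fin n → ℕ) {x : Fin n → ℝ} (hx : ∀ i, 0 < x i) :
    monom α x = exp (dotp (fun i => (α i : ℝ)) fun i => log (x i)) := by
  rw [monom, dotp, exp_sum]
  refine Finset.prod_congr rfl fun i _ => ?_
  rw [exp_nat_mul, exp_log (hx i)]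

theorem stmt14_general {n d : ℕ} (lam mu : Fin n → ℕ)
    (hmu : Antitone mu)
    (hld : ∑ i, lam i = d) (hmd : ∑ i, mu i = d)
    (hdom : ∀ k : ℕ,
      ∑ i ∈ Finset.univ.filter (fun i : Fin n => (i : ℕ) < k), mu i
        ≤ ∑ i ∈ Finset.univ.filter (fun i : Fin n => (i : ℕ) < k), lam i)
    (g : (Fin n → ℝ) → ℝ)
    (hg : ∀ y, g y =
      (∑ σ : Equiv.Perm (Fin n),
        Real.exp (dotp (fun i => ((permActN σ lam) i : ℝ)) y))
      - ∑ σ : Equiv.Perm (Fin n),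
        Real.exp (dotp (fun i => ((permActN σ mu) i : ℝ)) y)) :
    IsSAGE
      ((Finset.univ.image
          (fun σ : Equiv.Perm (Fin n) => fun i => ((permActN σ lam) i : ℝ)))
       ∪ (Finset.univ.image
          (fun σ : Equiv.Perm (Fin n) => fun i => ((permActN σ mu) i : ℝ)))) g ∧
    (∀ x : Fin n → ℝ, (∀ i, 0 < x i) → mmean mu x ≤ mmean lam x) := by
  have hmem : (fun i => (mu i : ℝ)) ∈ convexHull ℝ (orbitF fun i => (lam i : ℝ) : Set _) :=
    mem_convexHull_orbitF_of_prefixSum_le (fun _ _ h => Nat.cast_le.2 (hmu h))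
      (by exact_mod_cast hld.trans hmd.symm) fun k => by
        simp only [prefixSum]
        exact_mod_cast hdom k
  have hSAGE : IsSAGE (orbitF (fun i => (lam i : ℝ)) ∪ orbitF fun i => (mu i : ℝ)) g := by
    convert isSAGE_sum_exp_orbitF_sub_of_mem_convexHull hmem using 1
    exact funext hg
  refine ⟨hSAGE, fun x hx => ?_⟩
  have hlog := hSAGE.nonneg fun i => log (x i)
  rw [hg, sub_nonneg] at hlog
  simp only [mmean, monom_eq_exp_dotp _ hx]
  gcongr

/-- Muirhead's inequality as a SAGE certificate: if the partitions `lam ⪰ mu` of `d`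
(in the dominance order), then the symmetric signomial
`g(y) = Σ_σ e^{⟨σ(lam),y⟩} - Σ_σ e^{⟨σ(mu),y⟩}` is SAGE; in particular
`m_mu^{(n)}(x) ≤ m_lam^{(n)}(x)` for all `x` in the open positive orthant. -/
theorem stmt14 {n d : ℕ} (lam mu : Fin n → ℕ)
    (hlam : Antitone lam) (hmu : Antitone mu)
    (hld : ∑ i, lam i = d) (hmd : ∑ i, mu i = d)
    (hdom : ∀ k : ℕ,
      ∑ i ∈ Finset.univ.filter (fun i : Fin n => (i : ℕ) < k), mu i
        ≤ ∑ i ∈ Finset.univ.filter (fun i : Fin n => (i : ℕ) < k), lam i)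
    (g : (Fin n → ℝ) → ℝ)
    (hg : ∀ y, g y =
      (∑ σ : Equiv.Perm (Fin n),
        Real.exp (dotp (fun i => ((permActN σ lam) i : ℝ)) y))
      - ∑ σ : Equiv.Perm (Fin n),
        Real.exp (dotp (fun i => ((permActN σ mu) i : ℝ)) y)) :
    IsSAGE
      ((Finset.univ.image
          (fun σ : Equiv.Perm (Fin n) => fun i => ((permActN σ lam) i : ℝ)))
       ∪ (Finset.univ.image
          (fun σ : Equiv.Perm (Fin n) => fun i => ((permActN σ mu) i : ℝ)))) g ∧
    (∀ x : Fin n → ℝ, (∀ i, 0 < x i) → mmean mu x ≤ mmean lam x) :=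
  stmt14_general lam mu hmu hld hmd hdom g hg
end

section
/- For k ≥ 2, let M₆^{(k)}(x) = Σ_{i=1}^k x_i⁶ and M₃₃^{(k)}(x) = Σ_{1≤i<j≤k} x_i³x_j³, with support T_k = {6e_i : 1 ≤ i ≤ k} ∪ {3e_i + 3e_j : 1 ≤ i < j ≤ k} ⊂ ℕ^k. Then for α, β ∈ ℝ: the polynomial α·M₆^{(k)} + β·M₃₃^{(k)} belongs to C_SONC(T_k) for every k ≥ 2 if and only if α ≥ 0 and β = 0. In contrast, since (Σ_{i=1}^k x_i³)² = M₆^{(k)} + 2·M₃₃^{(k)}, the polynomial M₆^{(k)} + 2·M₃₃^{(k)} is nonnegative on ℝ^k for every k ≥ 2; hence the limit SONC cone {(α,β) : α·M₆^{(k)} + β·M₃₃^{(k)} ∈ C_SONC(T_k) for all k ≥ 2} = ℝ₊ × {0} has strictly smaller dimension than the corresponding limit cone of nonnegative polynomials. -/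
open Finset

/-!
On a sign vector `s ∈ {±1}ᵏ` every even monomial equals `1`, so each summand `g_β` of a SONC
decomposition agrees there with `E_β + b_β sᵝ`. The mixed second difference in two coordinates
`i < j` over the four sign patterns annihilates every `sᵝ` except `β = 3eᵢ + 3eⱼ`, so the summand
attached to `3eᵢ + 3eⱼ` carries the full coefficient `B` of `M₃₃`; its nonnegativity at `1` and
at the vector with `sⱼ = -1` forces `g_β(1) ≥ |B| + B`. Evaluating the decomposition at `1`
gives `(k choose 2) |B| ≤ k A`, which is impossible for large `k` unless `B = 0`.
-/

lemma sq_sum_eq_sum_sq_add_two_mul_sum_lt {ι R : Type*} [Fintype ι] [LinearOrder ι]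
    [CommRing R] (a : ι → R) :
    (∑ i, a i) ^ 2 = ∑ i, a i ^ 2 + 2 * ∑ i, ∑ j ∈ univ.filter (i < ·), a i * a j := by
  have hrow : ∀ i, ∑ j, a i * a j = a i ^ 2 + ∑ j ∈ univ.filter (i < ·), a i * a j
      + ∑ j ∈ univ.filter (· < i), a i * a j := by
    intro i
    have huniv : (univ : Finset ι) = insert i (univ.filter (i < ·) ∪ univ.filter (· < i)) := by
      ext j
      simp only [mem_univ, mem_insert, mem_union, mem_filter, true_and, true_iff]
      rcases lt_trichotomy j i with h | h | h <;> simp [h]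
    conv_lhs => rw [huniv]
    rw [sum_insert (by simp), sum_union (disjoint_filter.2 fun j _ h => h.not_gt), sq,
      add_assoc]
  have hswap : ∑ i, ∑ j ∈ univ.filter (· < i), a i * a j
      = ∑ i, ∑ j ∈ univ.filter (i < ·), a i * a j := by
    rw [sum_comm' (t' := univ) (s' := fun j => univ.filter (j < ·)) (by simp)]
    simp only [mul_comm]
  rw [sq, sum_mul_sum]
  simp only [hrow, sum_add_distrib, hswap]
  ring

section SignVectors

variable {n : ℕ}

def IsSignVector (s : Fin n → ℝ) : Prop := ∀ i, s i = 1 ∨ s i = -1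

lemma isSignVector_one : IsSignVector (fun _ : Fin n => (1 : ℝ)) := fun _ => Or.inl rfl

lemma IsSignVector.pow_of_even {s : Fin n → ℝ} (hs : IsSignVector s) (i : Fin n) {m : ℕ}
    (hm : Even m) : s i ^ m = 1 := by
  rcases hs i with h | h <;> simp [h, hm.neg_one_pow]

lemma IsSignVector.pow_of_odd {s : Fin n → ℝ} (hs : IsSignVector s) (i : Fin n) {m : ℕ}
    (hm : Odd m) : s i ^ m = s i := by
  rcases hs i with h | h <;> simp [h, hm.neg_one_pow]

lemma IsSignVector.monom_of_even {s : Fin n → ℝ} (hs : IsSignVector s) {a : Fin n → ℕ}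
    (ha : ∀ i, Even (a i)) : monom a s = 1 :=
  prod_eq_one fun i _ => hs.pow_of_even i (ha i)

lemma monom_one (a : Fin n → ℕ) : monom a (fun _ => 1) = 1 := by
  simp [monom]

lemma IsAG.nonneg {A : Finset (Fin n → ℕ)} {β : Fin n → ℕ} {g : (Fin n → ℝ) → ℝ}
    (hg : IsAG A β g) (x : Fin n → ℝ) : 0 ≤ g x :=
  hg.choose_spec.2.2.2 x

lemma IsAG.exists_affine_on_signVectors {A : Finset (Fin n → ℕ)} {β : Fin n → ℕ}
    {g : (Fin n → ℝ) → ℝ} (hg : IsAG A β g) :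
    ∃ E b : ℝ, ∀ s, IsSignVector s → g s = E + b * monom β s := by
  obtain ⟨c, -, hodd, hrep, -⟩ := hg
  refine ⟨∑ α ∈ A, c α, c β, fun s hs => ?_⟩
  rw [hrep, add_left_inj]
  refine sum_congr rfl fun α hα => ?_
  by_cases hα' : ∀ i, Even (α i)
  · rw [hs.monom_of_even hα', mul_one]
  · rw [hodd α hα hα', zero_mul]

def flipPair (i j : Fin n) (u v : ℝ) : Fin n → ℝ :=
  fun m => if m = i then u else if m = j then v else 1

lemma isSignVector_flipPair (i j : Fin n) {u v : ℝ} (hu : u = 1 ∨ u = -1)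
    (hv : v = 1 ∨ v = -1) : IsSignVector (flipPair i j u v) := by
  intro m
  unfold flipPair
  split_ifs <;> simp [hu, hv]

lemma monom_flipPair {i j : Fin n} (hij : i ≠ j) (a : Fin n → ℕ) (u v : ℝ) :
    monom a (flipPair i j u v) = u ^ a i * v ^ a j := by
  have hsplit : ∀ m, flipPair i j u v m ^ a m
      = (if m = i then u ^ a i else 1) * (if m = j then v ^ a j else 1) := by
    intro m
    unfold flipPair
    split_ifs <;> simp_all
  simp only [monom, hsplit, prod_mul_distrib, prod_ite_eq', mem_univ, if_true]

lemma sum_flipPair {i j : Fin n} (hij : i ≠ j) (u v : ℝ) :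
    ∑ m, flipPair i j u v m = u + v + (n - 2) := by
  have hsplit : ∀ m, flipPair i j u v m
      = 1 + (if m = i then u - 1 else 0) + (if m = j then v - 1 else 0) := by
    intro m
    unfold flipPair
    split_ifs <;> simp_all
  simp only [hsplit, sum_add_distrib, sum_ite_eq', mem_univ, if_true, sum_const, card_univ,
    Fintype.card_fin, nsmul_eq_mul, mul_one]
  ring

def mixedDiff (i j : Fin n) (F : (Fin n → ℝ) → ℝ) : ℝ :=
  F (flipPair i j 1 1) - F (flipPair i j 1 (-1)) - F (flipPair i j (-1) 1)
    + F (flipPair i j (-1) (-1))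

lemma mixedDiff_monom {i j : Fin n} (hij : i ≠ j) (a : Fin n → ℕ) :
    mixedDiff i j (monom a) = if Odd (a i) ∧ Odd (a j) then 4 else 0 := by
  simp only [mixedDiff, monom_flipPair hij, one_pow, one_mul, mul_one]
  rcases Nat.even_or_odd (a i) with hi | hi <;> rcases Nat.even_or_odd (a j) with hj | hj <;>
    norm_num [hi, hj, hi.neg_one_pow, hj.neg_one_pow, Nat.not_odd_iff_even]

lemma mixedDiff_of_affine_on_signVectors (i j : Fin n) {F : (Fin n → ℝ) → ℝ} {E b : ℝ}
    {β : Fin n → ℕ} (hF : ∀ s, IsSignVector s → F s = E + b * monom β s) :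
    mixedDiff i j F = b * mixedDiff i j (monom β) := by
  have hs : ∀ u v : ℝ, (u = 1 ∨ u = -1) → (v = 1 ∨ v = -1) →
      F (flipPair i j u v) = E + b * monom β (flipPair i j u v) :=
    fun u v hu hv => hF _ (isSignVector_flipPair i j hu hv)
  simp only [mixedDiff, hs, true_or, or_true]
  ring

lemma mixedDiff_of_sq_sum_on_signVectors {i j : Fin n} (hij : i ≠ j)
    {F : (Fin n → ℝ) → ℝ} {C D : ℝ} (hF : ∀ s, IsSignVector s → F s = C + D * (∑ m, s m) ^ 2) :
    mixedDiff i j F = 8 * D := by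
  have hs : ∀ u v : ℝ, (u = 1 ∨ u = -1) → (v = 1 ∨ v = -1) →
      F (flipPair i j u v) = C + D * (u + v + (n - 2)) ^ 2 := fun u v hu hv => by
    rw [hF _ (isSignVector_flipPair i j hu hv), sum_flipPair hij]
  simp only [mixedDiff, hs, true_or, or_true]
  ring

lemma mixedDiff_eq_sum_of_affine_on_signVectors (i j : Fin n) {T : Finset (Fin n → ℕ)}
    {f : (Fin n → ℝ) → ℝ} {g : (Fin n → ℕ) → (Fin n → ℝ) → ℝ}
    (hsum : ∀ x, f x = ∑ β ∈ T, g β x) {E b : (Fin n → ℕ) → ℝ}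
    (hg : ∀ β ∈ T, ∀ s, IsSignVector s → g β s = E β + b β * monom β s) :
    mixedDiff i j f = ∑ β ∈ T, b β * mixedDiff i j (monom β) := by
  have hsum' : mixedDiff i j f = ∑ β ∈ T, mixedDiff i j (g β) := by
    simp only [mixedDiff, hsum, sum_add_distrib, sum_sub_distrib]
  rw [hsum']
  exact sum_congr rfl fun β hβ => mixedDiff_of_affine_on_signVectors i j (hg β hβ)

end SignVectors

section Cone

variable {n : ℕ} {T A : Finset (Fin n → ℕ)} {β : Fin n → ℕ}

lemma monom_nonneg_of_even {a : Fin n → ℕ} (ha : ∀ i, Even (a i)) (x : Fin n → ℝ) :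
    0 ≤ monom a x :=
  prod_nonneg fun i _ => (ha i).pow_nonneg (x i)

lemma isAG_zero : IsAG A β (fun _ => 0) := ⟨0, by simp⟩

lemma IsAG.add {f g : (Fin n → ℝ) → ℝ} (hf : IsAG A β f) (hg : IsAG A β g) :
    IsAG A β (f + g) := by
  obtain ⟨c, hc, hcodd, hcrep, hcnn⟩ := hf
  obtain ⟨d, hd, hdodd, hdrep, hdnn⟩ := hg
  refine ⟨c + d, fun α hα => add_nonneg (hc α hα) (hd α hα),
    fun γ hγ hodd => by simp [hcodd γ hγ hodd, hdodd γ hγ hodd], fun x => ?_,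
    fun x => add_nonneg (hcnn x) (hdnn x)⟩
  simp only [Pi.add_apply, hcrep, hdrep, add_mul, sum_add_distrib]
  ring

lemma isSONC_zero : IsSONC T 0 := ⟨0, fun _ _ => isAG_zero, by simp⟩

lemma IsSONC.add {f g : (Fin n → ℝ) → ℝ} (hf : IsSONC T f) (hg : IsSONC T g) :
    IsSONC T (f + g) := by
  obtain ⟨F, hF, hFsum⟩ := hf
  obtain ⟨G, hG, hGsum⟩ := hg
  exact ⟨F + G, fun β hβ => (hF β hβ).add (hG β hβ),
    fun x => by simp [hFsum, hGsum, sum_add_distrib]⟩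

lemma isSONC_monom_of_even (hβ : β ∈ T) (heven : ∀ i, Even (β i)) {c : ℝ} (hc : 0 ≤ c) :
    IsSONC T (fun x => c * monom β x) := by
  refine ⟨fun γ x => if γ = β then c * monom β x else 0, fun γ _ => ?_,
    fun x => by simp [hβ]⟩
  by_cases h : γ = β
  · subst h
    simp only [if_true]
    refine ⟨fun α => if α = γ then c else 0, fun α hα => ?_, fun α hα _ => ?_, fun x => ?_,
      fun x => mul_nonneg hc (monom_nonneg_of_even heven x)⟩
    · simp [ne_of_mem_erase hα]
    · simp [ne_of_mem_erase hα]
    · rw [sum_eq_zero fun α hα => by simp [ne_of_mem_erase hα]]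
      simp
  · simpa [h] using isAG_zero

end Cone

section Sextic

variable {k : ℕ}

def exp6 (i : Fin k) : Fin k → ℕ := fun j => if j = i then 6 else 0

def exp33 (p : Fin k × Fin k) : Fin k → ℕ := fun j => if j = p.1 ∨ j = p.2 then 3 else 0

def sexticSupport (k : ℕ) : Finset (Fin k → ℕ) :=
  univ.image exp6 ∪ univ.offDiag.image exp33

def ltPairs (k : ℕ) : Finset (Fin k × Fin k) := univ.filter fun p => p.1 < p.2

def M₆ (x : Fin k → ℝ) : ℝ := ∑ i, x i ^ 6

def M₃₃ (x : Fin k → ℝ) : ℝ := ∑ i, ∑ j ∈ univ.filter (fun j => i < j), x i ^ 3 * x j ^ 3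

lemma monom_exp6 (i : Fin k) (x : Fin k → ℝ) : monom (exp6 i) x = x i ^ 6 := by
  simp [monom, exp6, pow_ite]

lemma exp33_mem_sexticSupport {p : Fin k × Fin k} (hp : p ∈ ltPairs k) :
    exp33 p ∈ sexticSupport k := by
  simp only [ltPairs, mem_filter] at hp
  exact mem_union_right _ (mem_image.2 ⟨p, by simp [hp.2.ne], rfl⟩)

lemma exp33_injOn : Set.InjOn (exp33 (k := k)) (ltPairs k) := by
  intro p hp q hq h
  simp only [ltPairs, coe_filter, mem_univ, true_and] at hp hq
  have h1 := congrFun h p.1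
  have h2 := congrFun h p.2
  simp only [exp33] at h1 h2
  ext <;> split_ifs at h1 h2 <;> grind

lemma odd_and_odd_iff_eq_exp33 {β : Fin k → ℕ} (hβ : β ∈ sexticSupport k)
    {p : Fin k × Fin k} (hp : p ∈ ltPairs k) : Odd (β p.1) ∧ Odd (β p.2) ↔ β = exp33 p := by
  refine ⟨fun ⟨h1, h2⟩ => ?_, fun h => by subst h; simp [exp33, Nat.odd_iff]⟩
  simp only [ltPairs, mem_filter, mem_univ, true_and] at hp
  simp only [sexticSupport, mem_union, mem_image, mem_univ, true_and, mem_offDiag] at hβ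
  rcases hβ with ⟨m, rfl⟩ | ⟨q, hq, rfl⟩
  · simp only [exp6] at h1
    split_ifs at h1 <;> grind
  · funext j
    simp only [exp33] at h1 h2 ⊢
    split_ifs at h1 h2 <;> grind

lemma sum_sexticSupport_mul_mixedDiff_monom (b : (Fin k → ℕ) → ℝ) {p : Fin k × Fin k}
    (hp : p ∈ ltPairs k) :
    ∑ β ∈ sexticSupport k, b β * mixedDiff p.1 p.2 (monom β) = 4 * b (exp33 p) := by
  have hne : p.1 ≠ p.2 := (mem_filter.1 hp).2.ne
  rw [sum_congr rfl fun β hβ => by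
      rw [mixedDiff_monom hne, if_congr (odd_and_odd_iff_eq_exp33 hβ hp) rfl rfl, mul_ite,
        mul_zero],
    sum_ite_eq', if_pos (exp33_mem_sexticSupport hp), mul_comm]

lemma sq_sum_cube_eq (x : Fin k → ℝ) : (∑ i, x i ^ 3) ^ 2 = M₆ x + 2 * M₃₃ x := by
  simp only [sq_sum_eq_sum_sq_add_two_mul_sum_lt, M₆, M₃₃, ← pow_mul]

lemma IsSignVector.M₆_eq {s : Fin k → ℝ} (hs : IsSignVector s) : M₆ s = k := by
  simp [M₆, hs.pow_of_even _ (by decide : Even 6)]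

lemma IsSignVector.two_mul_M₃₃_eq {s : Fin k → ℝ} (hs : IsSignVector s) :
    2 * M₃₃ s = (∑ i, s i) ^ 2 - k := by
  have h := sq_sum_cube_eq s
  simp only [hs.pow_of_odd _ (by decide : Odd 3), hs.M₆_eq] at h
  linarith

lemma M₃₃_one : M₃₃ (fun _ : Fin k => (1 : ℝ)) = #(ltPairs k) := by
  rw [ltPairs, card_filter, Fintype.sum_prod_type]
  simp [M₃₃, sum_boole]

lemma two_mul_card_ltPairs : 2 * (#(ltPairs k) : ℝ) = k ^ 2 - k := by
  simpa [M₃₃_one] using (isSignVector_one (n := k)).two_mul_M₃₃_eq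

lemma mixedDiff_M₆_M₃₃ {i j : Fin k} (hij : i ≠ j) (A B : ℝ) :
    mixedDiff i j (fun x => A * M₆ x + B * M₃₃ x) = 4 * B := by
  rw [mixedDiff_of_sq_sum_on_signVectors hij (C := k * A - B * k / 2) (D := B / 2)]
  · ring
  · intro s hs
    rw [hs.M₆_eq]
    linear_combination B / 2 * hs.two_mul_M₃₃_eq

lemma card_ltPairs_mul_abs_le_of_isSONC {A B : ℝ}
    (hf : IsSONC (sexticSupport k) (fun x => A * M₆ x + B * M₃₃ x)) :
    #(ltPairs k) * |B| ≤ k * A := by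
  obtain ⟨g, hg, hsum⟩ := hf
  choose! E b hEb using fun β hβ => (hg β hβ).exists_affine_on_signVectors
  have hcoef : ∀ p ∈ ltPairs k, b (exp33 p) = B := by
    intro p hp
    have h := mixedDiff_eq_sum_of_affine_on_signVectors p.1 p.2 hsum hEb
    rw [mixedDiff_M₆_M₃₃ (mem_filter.1 hp).2.ne, sum_sexticSupport_mul_mixedDiff_monom b hp] at h
    linarith
  have hpair : ∀ p ∈ ltPairs k, |B| + B ≤ g (exp33 p) (fun _ => 1) := by
    intro p hp
    have hmem := exp33_mem_sexticSupport hp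
    have hflip : IsSignVector (flipPair p.1 p.2 1 (-1)) :=
      isSignVector_flipPair _ _ (by simp) (by simp)
    have h1 := hEb _ hmem _ isSignVector_one
    have h2 := hEb _ hmem _ hflip
    rw [monom_one, mul_one, hcoef p hp] at h1
    rw [monom_flipPair (mem_filter.1 hp).2.ne, hcoef p hp] at h2
    norm_num [exp33] at h2
    have := (hg _ hmem).nonneg (flipPair p.1 p.2 1 (-1))
    have := (hg _ hmem).nonneg (fun _ => 1)
    rw [h1, add_le_add_iff_right, abs_le]
    constructor <;> linarith
  have hone : A * k + B * #(ltPairs k) = ∑ β ∈ sexticSupport k, g β (fun _ => 1) := by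
    rw [← hsum]
    simp only [isSignVector_one.M₆_eq, M₃₃_one]
  have hsub : ∑ p ∈ ltPairs k, g (exp33 p) (fun _ => 1)
      ≤ ∑ β ∈ sexticSupport k, g β (fun _ => 1) := by
    rw [← sum_image (f := fun β => g β (fun _ => 1)) exp33_injOn]
    exact sum_le_sum_of_subset_of_nonneg (image_subset_iff.2 fun p => exp33_mem_sexticSupport)
      fun β hβ _ => (hg β hβ).nonneg _
  have hlow := sum_le_sum hpair
  rw [sum_const, nsmul_eq_mul] at hlow
  linarith

lemma sub_one_mul_abs_le_of_isSONC {A B : ℝ}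
    (hf : IsSONC (sexticSupport k) (fun x => A * M₆ x + B * M₃₃ x)) (hk : 0 < k) :
    (k - 1) * |B| ≤ 2 * A := by
  refine le_of_mul_le_mul_left ?_ (Nat.cast_pos.2 hk : (0 : ℝ) < k)
  calc (k : ℝ) * ((k - 1) * |B|) = 2 * #(ltPairs k) * |B| := by
        rw [two_mul_card_ltPairs]; ring
    _ ≤ k * (2 * A) := by linarith [card_ltPairs_mul_abs_le_of_isSONC hf]

lemma isSONC_M₆ {A : ℝ} (hA : 0 ≤ A) : IsSONC (sexticSupport k) (fun x => A * M₆ x) := by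
  have h : IsSONC (sexticSupport k) (∑ i, fun x => A * monom (exp6 i) x) :=
    sum_induction _ (IsSONC _) (fun _ _ => IsSONC.add) isSONC_zero fun i _ =>
      isSONC_monom_of_even (mem_union_left _ (mem_image_of_mem _ (mem_univ i)))
        (fun j => by unfold exp6; split_ifs <;> decide) hA
  convert h using 1
  ext x
  simp [M₆, monom_exp6, mul_sum]

end Sextic

theorem isSONC_sextic_forall_iff {A B : ℝ} :
    (∀ k, 2 ≤ k → IsSONC (sexticSupport k) (fun x => A * M₆ x + B * M₃₃ x))
      ↔ 0 ≤ A ∧ B = 0 := by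
  refine ⟨fun h => ?_, ?_⟩
  · have hA : 0 ≤ A := by
      have := sub_one_mul_abs_le_of_isSONC (h 2 le_rfl) two_pos
      norm_num at this
      linarith [abs_nonneg B]
    refine ⟨hA, abs_eq_zero.1 (le_antisymm ?_ (abs_nonneg B))⟩
    by_contra! hB
    obtain ⟨m, hm⟩ := exists_nat_gt (2 * A / |B|)
    have := sub_one_mul_abs_le_of_isSONC (h (m + 2) (by omega)) (by omega)
    rw [div_lt_iff₀ hB] at hm
    push_cast at this
    linarith
  · rintro ⟨hA, rfl⟩ k -
    simpa using isSONC_M₆ hA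

/-- The limit SONC cone for the support of `M₆` and `M₃₃` degenerates:
`α M₆^{(k)} + β M₃₃^{(k)}` is SONC for all `k ≥ 2` iff `α ≥ 0` and `β = 0`,
while `M₆^{(k)} + 2 M₃₃^{(k)} = (Σ xᵢ³)²` is nonnegative for all `k ≥ 2`;
hence the limit SONC cone is `ℝ₊ × {0}`, of strictly smaller dimension. -/
theorem stmt16
    (M6 : (k : ℕ) → (Fin k → ℝ) → ℝ) (hM6 : ∀ k x, M6 k x = ∑ i, x i ^ 6)
    (M33 : (k : ℕ) → (Fin k → ℝ) → ℝ)
    (hM33 : ∀ k x, M33 k x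
      = ∑ i, ∑ j ∈ Finset.univ.filter (fun j => i < j), x i ^ 3 * x j ^ 3)
    (T : (k : ℕ) → Finset (Fin k → ℕ))
    (hT : ∀ k, T k =
      (Finset.univ.image (fun i (j : Fin k) => if j = i then 6 else 0))
      ∪ (Finset.univ.offDiag.image
          (fun p (j : Fin k) => if j = p.1 ∨ j = p.2 then 3 else 0))) :
    (∀ α β : ℝ,
      (∀ k, 2 ≤ k → IsSONC (T k) (fun x => α * M6 k x + β * M33 k x))
        ↔ (0 ≤ α ∧ β = 0)) ∧
    (∀ k, 2 ≤ k → ∀ x : Fin k → ℝ,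
      (∑ i, x i ^ 3) ^ 2 = M6 k x + 2 * M33 k x ∧ 0 ≤ M6 k x + 2 * M33 k x) ∧
    {pr : ℝ × ℝ | ∀ k, 2 ≤ k →
        IsSONC (T k) (fun x => pr.1 * M6 k x + pr.2 * M33 k x)}
      = {pr : ℝ × ℝ | 0 ≤ pr.1 ∧ pr.2 = 0} := by
  obtain rfl : M6 = fun k => M₆ := funext₂ hM6
  obtain rfl : M33 = fun k => M₃₃ := funext₂ hM33
  obtain rfl : T = sexticSupport := funext hT
  refine ⟨fun _ _ => isSONC_sextic_forall_iff,
    fun k _ x => ⟨sq_sum_cube_eq x, sq_sum_cube_eq x ▸ sq_nonneg _⟩, ?_⟩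
  ext
  exact isSONC_sextic_forall_iff
end

section
/- Let T ⊂ ℕ^n be a finite S_n-invariant set with a set of orbit representatives T̂, let k ≥ n, and pad each λ ∈ T̂ with zeros to length k+1. If c = (c_λ)_{λ∈T̂} are real coefficients such that p_k = Σ_{λ∈T̂} c_λ·m_λ^{(k)} is a SONC polynomial in k variables, then p_{k+1} = Σ_{λ∈T̂} c_λ·m_λ^{(k+1)} is a SONC polynomial in k+1 variables; likewise, if p_k is nonnegative on ℝ^k then p_{k+1} is nonnegative on ℝ^{k+1}. (In particular, under the normalized monomial-mean identification, the sequence of cones C^{m,k}_SONC(T) is increasing in k.) -/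
open Finset

/-!
Appending a zero to `λ` and symmetrizing over `S_{k+1}` is the same as averaging
`m_λ^{(k)}` over the `k + 1` ways of deleting a variable, so
`p_{k+1}(x) = (k+1)⁻¹ Σ_q p_k(x with x_q deleted)`. Nonnegativity passes through this average.
For SONC, deleting `x_q` turns an AG polynomial with exponents `β` into one with exponents
`β` with a zero inserted at `q`; these lie again in the orbits of the padded representatives,
and SONC cones are closed under sums and nonnegative scaling.
-/

open Equiv

section Symmetrization

variable {m : ℕ}

lemma permActN_mul (σ τ : Perm (Fin m)) (v : Fin m → ℕ) :
    permActN σ (permActN τ v) = permActN (σ * τ) v := by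
  funext i
  simp [permActN, mul_inv_rev]

lemma monom_permActN (σ : Perm (Fin m)) (v : Fin m → ℕ) (x : Fin m → ℝ) :
    monom (permActN σ v) x = monom v (x ∘ σ) := by
  unfold monom permActN
  rw [← Equiv.prod_comp σ]
  simp

lemma mmean_permActN (ρ : Perm (Fin m)) (v : Fin m → ℕ) (x : Fin m → ℝ) :
    mmean (permActN ρ v) x = mmean v x := by
  unfold mmean
  congr 1
  exact Fintype.sum_equiv (Equiv.mulRight ρ) _ _ fun σ => by rw [permActN_mul]; rfl

lemma insertNth_eq_permActN_cons (p : Fin (m + 1)) (a : ℕ) (v : Fin m → ℕ) :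
    p.insertNth a v = permActN p.cycleRange⁻¹ (Fin.cons a v) := by
  funext i
  simp [permActN]

lemma cons_permActN (σ : Perm (Fin m)) (a : ℕ) (v : Fin m → ℕ) :
    (Fin.cons a (permActN σ v) : Fin (m + 1) → ℕ)
      = permActN (Perm.decomposeFin.symm (0, σ)) (Fin.cons a v) := by
  have h : ∀ i, (Fin.cons a (permActN σ v) : Fin (m + 1) → ℕ) (Perm.decomposeFin.symm (0, σ) i)
      = (Fin.cons a v : Fin (m + 1) → ℕ) i := by
    intro i
    induction i using Fin.cases with
    | zero => simp
    | succ j => simp [permActN]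
  funext i
  simpa [permActN, Perm.inv_def] using h ((Perm.decomposeFin.symm (0, σ))⁻¹ i)

lemma exists_insertNth_permActN (p q : Fin (m + 1)) (a : ℕ) (σ : Perm (Fin m)) (v : Fin m → ℕ) :
    ∃ τ : Perm (Fin (m + 1)), p.insertNth a (permActN σ v) = permActN τ (q.insertNth a v) := by
  refine ⟨p.cycleRange⁻¹ * Perm.decomposeFin.symm (0, σ) * q.cycleRange, ?_⟩
  rw [insertNth_eq_permActN_cons, insertNth_eq_permActN_cons, cons_permActN, permActN_mul,
    permActN_mul, mul_assoc, mul_inv_cancel, mul_one]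

lemma monom_insertNth_zero (p : Fin (m + 1)) (v : Fin m → ℕ) (x : Fin (m + 1) → ℝ) :
    monom (p.insertNth 0 v) x = monom v (p.removeNth x) := by
  unfold monom
  rw [Fin.prod_univ_succAbove _ p]
  simp [Fin.removeNth]

lemma even_insertNth_zero (p : Fin (m + 1)) {v : Fin m → ℕ} (hv : ∀ i, Even (v i))
    (i : Fin (m + 1)) : Even ((p.insertNth 0 v : Fin (m + 1) → ℕ) i) := by
  induction i using p.succAboveCases <;> simp [hv]

-- A permutation of `Fin (m + 1)` is determined by the image `q` of `0` and a permutation of the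
-- remaining `m` points, read through `q.cycleRange⁻¹`, which maps `j.succ` to `q.succAbove j`.
lemma bijective_cycleRange_inv_mul_decomposeFin :
    Function.Bijective fun q : Fin (m + 1) × Perm (Fin m) =>
      q.1.cycleRange⁻¹ * Perm.decomposeFin.symm (0, q.2) := by
  rw [Fintype.bijective_iff_injective_and_card]
  refine ⟨fun ⟨p, σ⟩ ⟨q, τ⟩ h => ?_, by simp [Fintype.card_perm, Nat.factorial_succ]⟩
  have hpq : p = q := by simpa [Perm.inv_def] using congr($h 0)
  subst hpq
  simpa using Perm.decomposeFin.symm.injective (mul_left_cancel h)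

lemma mmean_insertNth_zero (p : Fin (m + 1)) (v : Fin m → ℕ) (x : Fin (m + 1) → ℝ) :
    mmean (p.insertNth 0 v) x = ((m : ℝ) + 1)⁻¹ * ∑ q : Fin (m + 1), mmean v (q.removeNth x) := by
  have hsum : ∑ σ : Perm (Fin (m + 1)), monom (permActN σ (Fin.cons 0 v)) x
      = ∑ q : Fin (m + 1), ∑ τ : Perm (Fin m), monom (permActN τ v) (q.removeNth x) := by
    rw [← Fintype.sum_prod_type',
      ← bijective_cycleRange_inv_mul_decomposeFin.sum_comp]
    refine Fintype.sum_congr _ _ fun ⟨q, τ⟩ => ?_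
    rw [monom_permActN, monom_permActN, ← Fin.insertNth_zero', monom_insertNth_zero]
    congr 1
    funext j
    simp [Fin.removeNth, Perm.inv_def]
  rw [insertNth_eq_permActN_cons, mmean_permActN]
  unfold mmean
  rw [hsum, Finset.mul_sum, Finset.mul_sum]
  refine Finset.sum_congr rfl fun q _ => ?_
  rw [← mul_assoc, Nat.factorial_succ]
  push_cast
  field_simp

end Symmetrization

namespace IsAG

variable {m : ℕ} {A : Finset (Fin m → ℕ)} {β : Fin m → ℕ} {f g : (Fin m → ℝ) → ℝ}

lemma zero (A : Finset (Fin m → ℕ)) (β : Fin m → ℕ) : IsAG A β fun _ => 0 :=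
  ⟨0, fun _ _ => le_rfl, fun _ _ _ => rfl, fun _ => by simp, fun _ => le_rfl⟩

lemma add_s17 (hf : IsAG A β f) (hg : IsAG A β g) : IsAG A β fun x => f x + g x := by
  obtain ⟨c, hc, hc_odd, hfc, hf⟩ := hf
  obtain ⟨d, hd, hd_odd, hgd, hg⟩ := hg
  refine ⟨c + d, fun α hα => add_nonneg (hc α hα) (hd α hα),
    fun γ hγ hodd => by simp [hc_odd γ hγ hodd, hd_odd γ hγ hodd], fun x => ?_,
    fun x => add_nonneg (hf x) (hg x)⟩
  simp only [hfc, hgd, Pi.add_apply, add_mul, Finset.sum_add_distrib]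
  ring

lemma sum {ι : Type*} (s : Finset ι) {F : ι → (Fin m → ℝ) → ℝ} (hF : ∀ i ∈ s, IsAG A β (F i)) :
    IsAG A β fun x => ∑ i ∈ s, F i x := by
  classical
  induction s using Finset.induction_on with
  | empty => simpa using zero A β
  | insert i s hi ih =>
    simp only [Finset.sum_insert hi]
    exact add_s17 (hF i (mem_insert_self i s)) (ih fun j hj => hF j (mem_insert_of_mem hj))

lemma const_mul (hf : IsAG A β f) {t : ℝ} (ht : 0 ≤ t) : IsAG A β fun x => t * f x := by
  obtain ⟨c, hc, hc_odd, hfc, hf⟩ := hf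
  refine ⟨t • c, fun α hα => mul_nonneg ht (hc α hα),
    fun γ hγ hodd => by simp [hc_odd γ hγ hodd], fun x => ?_, fun x => mul_nonneg ht (hf x)⟩
  simp only [hfc, Pi.smul_apply, smul_eq_mul, mul_add, Finset.mul_sum, mul_assoc]

lemma mono {A' : Finset (Fin m → ℕ)} (hf : IsAG A β f) (hA : A ⊆ A') (hβ : β ∉ A') :
    IsAG A' β f := by
  classical
  obtain ⟨c, hc, hc_odd, hfc, hf⟩ := hf
  have hβA (α : Fin m → ℕ) (hα : α ∈ A') : α ≠ β := ne_of_mem_of_not_mem hα hβ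
  refine ⟨fun α => if α ∈ A ∨ α = β then c α else 0, fun α hα => ?_, fun γ hγ hodd => ?_,
    fun x => ?_, hf⟩
  · dsimp only
    split_ifs with h
    · exact hc α (h.resolve_right (hβA α hα))
    · exact le_rfl
  · dsimp only
    split_ifs with h
    · exact hc_odd γ (h.resolve_right (hβA γ hγ)) hodd
    · rfl
  · dsimp only
    rw [hfc, if_pos (Or.inr rfl),
      ← Finset.sum_subset hA fun α hα hαA => by simp [hαA, hβA α hα]]
    exact congrArg (· + _) (Finset.sum_congr rfl fun α hα => by rw [if_pos (Or.inl hα)])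

lemma comp {k : ℕ} (hf : IsAG A β f) {E : (Fin m → ℕ) → (Fin k → ℕ)} (hE : Function.Injective E)
    {z : (Fin k → ℝ) → (Fin m → ℝ)} (hmonom : ∀ α x, monom (E α) x = monom α (z x))
    (heven : ∀ α, (∀ i, Even (α i)) → ∀ i, Even (E α i)) :
    IsAG (A.image E) (E β) fun x => f (z x) := by
  classical
  obtain ⟨c, hc, hc_odd, hfc, hf⟩ := hf
  have hcE : ∀ α, c (Function.invFun E (E α)) = c α := fun α => by
    rw [Function.leftInverse_invFun hE α]
  refine ⟨c ∘ Function.invFun E, ?_, ?_, fun x => ?_, fun x => hf (z x)⟩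
  · simpa [hcE] using hc
  · simp only [Finset.mem_image, forall_exists_index, and_imp]
    rintro _ α hα rfl hodd
    simpa [hcE] using hc_odd α hα fun heven' => hodd (heven α heven')
  · simp [hfc, Finset.sum_image fun a _ b _ h => hE h, hcE, hmonom]

end IsAG

namespace IsSONC

variable {m : ℕ} {S : Finset (Fin m → ℕ)} {f g : (Fin m → ℝ) → ℝ}

lemma zero (S : Finset (Fin m → ℕ)) : IsSONC S fun _ => 0 :=
  ⟨fun _ _ => 0, fun β _ => IsAG.zero _ β, fun _ => by simp⟩

lemma add_s17 (hf : IsSONC S f) (hg : IsSONC S g) : IsSONC S fun x => f x + g x := by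
  obtain ⟨F, hF, hfF⟩ := hf
  obtain ⟨G, hG, hgG⟩ := hg
  exact ⟨fun β x => F β x + G β x, fun β hβ => (hF β hβ).add_s17 (hG β hβ),
    fun x => by simp [hfF, hgG, Finset.sum_add_distrib]⟩

lemma sum {ι : Type*} (s : Finset ι) {F : ι → (Fin m → ℝ) → ℝ}
    (hF : ∀ i ∈ s, IsSONC S (F i)) : IsSONC S fun x => ∑ i ∈ s, F i x := by
  classical
  induction s using Finset.induction_on with
  | empty => simpa using zero S
  | insert i s hi ih =>
    simp only [Finset.sum_insert hi]
    exact add_s17 (hF i (mem_insert_self i s)) (ih fun j hj => hF j (mem_insert_of_mem hj))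

lemma const_mul (hf : IsSONC S f) {t : ℝ} (ht : 0 ≤ t) : IsSONC S fun x => t * f x := by
  obtain ⟨F, hF, hfF⟩ := hf
  exact ⟨fun β x => t * F β x, fun β hβ => (hF β hβ).const_mul ht,
    fun x => by simp [hfF, Finset.mul_sum]⟩

lemma comp {k : ℕ} {S' : Finset (Fin k → ℕ)} (hf : IsSONC S f) {E : (Fin m → ℕ) → (Fin k → ℕ)}
    (hE : Function.Injective E) (hES : Set.MapsTo E S S') {z : (Fin k → ℝ) → (Fin m → ℝ)}
    (hmonom : ∀ α x, monom (E α) x = monom α (z x))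
    (heven : ∀ α, (∀ i, Even (α i)) → ∀ i, Even (E α i)) :
    IsSONC S' fun x => f (z x) := by
  classical
  obtain ⟨F, hF, hfF⟩ := hf
  refine ⟨fun β' x => ∑ β ∈ S with E β = β', F β (z x), fun β' _ => IsAG.sum _ fun β hβ => ?_,
    fun x => by simp only [hfF, Finset.sum_fiberwise_of_maps_to hES]⟩
  obtain ⟨hβS, rfl⟩ := Finset.mem_filter.mp hβ
  refine ((hF β hβS).comp hE hmonom heven).mono ?_ (Finset.notMem_erase _ _)
  intro α' hα'
  obtain ⟨α, hα, rfl⟩ := Finset.mem_image.mp hα'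
  obtain ⟨hne, hαS⟩ := Finset.mem_erase.mp hα
  exact Finset.mem_erase.mpr ⟨hE.ne hne, hES hαS⟩

end IsSONC

theorem stmt17_general {n : ℕ} (Trep : Finset (Fin n → ℕ))
    (cc : (Fin n → ℕ) → ℝ) (k : ℕ) (hk : n ≤ k)
    (pad : (m : ℕ) → (Fin n → ℕ) → (Fin m → ℕ))
    (hpad : ∀ m (lam : Fin n → ℕ) (i : Fin m),
      pad m lam i = if h : (i : ℕ) < n then lam ⟨i, h⟩ else 0)
    (p : (m : ℕ) → (Fin m → ℝ) → ℝ)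
    (hp : ∀ m (x : Fin m → ℝ), p m x = ∑ lam ∈ Trep, cc lam * mmean (pad m lam) x)
    (S : (m : ℕ) → Finset (Fin m → ℕ))
    (hS : ∀ m, S m = Trep.biUnion (fun lam =>
      Finset.univ.image (fun σ : Equiv.Perm (Fin m) => permActN σ (pad m lam)))) :
    (IsSONC (S k) (p k) → IsSONC (S (k+1)) (p (k+1))) ∧
    ((∀ x, 0 ≤ p k x) → (∀ x, 0 ≤ p (k+1) x)) := by
  have hpad_succ (lam : Fin n → ℕ) : pad (k + 1) lam = (Fin.last k).insertNth 0 (pad k lam) := by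
    rw [Fin.insertNth_last']
    funext i
    induction i using Fin.lastCases with
    | last => simp [hpad, hk]
    | cast j => simp [hpad]
  have hp_succ :
      p (k + 1) = fun x => ((k : ℝ) + 1)⁻¹ * ∑ q : Fin (k + 1), p k (q.removeNth x) := by
    funext x
    simp only [hp, hpad_succ, mmean_insertNth_zero, Finset.mul_sum]
    rw [Finset.sum_comm]
    exact Finset.sum_congr rfl fun _ _ => Finset.sum_congr rfl fun _ _ => by ring
  have hS_mapsTo (q : Fin (k + 1)) :
      Set.MapsTo (Fin.insertNth (α := fun _ => ℕ) q 0) (S k) (S (k + 1)) := by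
    intro β hβ
    simp only [hS, Finset.mem_coe, Finset.mem_biUnion, Finset.mem_image, Finset.mem_univ,
      true_and] at hβ ⊢
    obtain ⟨lam, hlam, σ, rfl⟩ := hβ
    obtain ⟨τ, hτ⟩ := exists_insertNth_permActN q (Fin.last k) 0 σ (pad k lam)
    exact ⟨lam, hlam, τ, by rw [hpad_succ, hτ]⟩
  refine ⟨fun hsonc => ?_, fun hnonneg x => ?_⟩
  · rw [hp_succ]
    refine (IsSONC.sum _ fun q _ => ?_).const_mul (by positivity)
    exact hsonc.comp (Fin.insertNth_right_injective 0) (hS_mapsTo q) (monom_insertNth_zero q)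
      fun α hα => even_insertNth_zero q hα
  · rw [hp_succ]
    exact mul_nonneg (by positivity) (Finset.sum_nonneg fun q _ => hnonneg _)

/-- Stability of normalized monomial-mean SONC certificates under adding a variable:
if `p_k = Σ_{λ ∈ Trep} c_λ m_λ^{(k)}` is SONC (on its exponent set), then so is
`p_{k+1}`; likewise for nonnegativity. -/
theorem stmt17 {n : ℕ} (T : Finset (Fin n → ℕ))
    (hTinv : ∀ σ : Equiv.Perm (Fin n), ∀ α ∈ T, permActN σ α ∈ T)
    (Trep : Finset (Fin n → ℕ)) (hsub : Trep ⊆ T)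
    (hreps : ∀ α ∈ T, ∃! r, r ∈ Trep ∧ ∃ σ : Equiv.Perm (Fin n), permActN σ r = α)
    (cc : (Fin n → ℕ) → ℝ) (k : ℕ) (hk : n ≤ k)
    (pad : (m : ℕ) → (Fin n → ℕ) → (Fin m → ℕ))
    (hpad : ∀ m (lam : Fin n → ℕ) (i : Fin m),
      pad m lam i = if h : (i : ℕ) < n then lam ⟨i, h⟩ else 0)
    (p : (m : ℕ) → (Fin m → ℝ) → ℝ)
    (hp : ∀ m (x : Fin m → ℝ), p m x = ∑ lam ∈ Trep, cc lam * mmean (pad m lam) x)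
    (S : (m : ℕ) → Finset (Fin m → ℕ))
    (hS : ∀ m, S m = Trep.biUnion (fun lam =>
      Finset.univ.image (fun σ : Equiv.Perm (Fin m) => permActN σ (pad m lam)))) :
    (IsSONC (S k) (p k) → IsSONC (S (k+1)) (p (k+1))) ∧
    ((∀ x, 0 ≤ p k x) → (∀ x, 0 ≤ p (k+1) x)) :=
  stmt17_general Trep cc k hk pad hpad p hp S hS
end

section
/- Let f(x₁,x₂,x₃) = e^{4x₁} + e^{4x₂} + e^{4x₃} − 5(e^{x₁+x₂} + e^{x₁+x₃} + e^{x₂+x₃}) − 6e^{x₁+x₂+x₃} + w with w ∈ ℝ. Then f attains its infimum over ℝ³ at the diagonal point (ln(5/2), ln(5/2), ln(5/2)), and f(x) ≥ 0 for all x ∈ ℝ³ if and only if w ≥ 1125/16. -/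
open Finset

lemma key18 (u v t : ℝ) (hu : 0 < u) (hv : 0 < v) (ht : 0 < t) :
    5*(u*v+u*t+v*t) + 6*(u*v*t) ≤ u^4+v^4+t^4 + 1125/16 := by
  have h1 : ∀ a : ℝ, 0 ≤ (a-5/2)^2 * (a^2+3*a+15/4) := by
    intro a
    apply mul_nonneg (sq_nonneg _)
    nlinarith [sq_nonneg (a+3/2)]
  nlinarith [h1 u, h1 v, h1 t, sq_nonneg (u-v), sq_nonneg (u-t), sq_nonneg (v-t),
    mul_nonneg (add_pos (add_pos hu hv) ht).le (sq_nonneg (u-v)),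
    mul_nonneg (add_pos (add_pos hu hv) ht).le (sq_nonneg (u-t)),
    mul_nonneg (add_pos (add_pos hu hv) ht).le (sq_nonneg (v-t))]

/-- The symmetric signomial
`f = e^{4x₁} + e^{4x₂} + e^{4x₃} - 5(e^{x₁+x₂} + e^{x₁+x₃} + e^{x₂+x₃}) - 6e^{x₁+x₂+x₃} + w`
attains its infimum at the diagonal point `(ln(5/2), ln(5/2), ln(5/2))`, and is
nonnegative iff `w ≥ 1125/16`. -/
theorem stmt18 (w : ℝ) (f : (Fin 3 → ℝ) → ℝ)
    (hf : ∀ x, f x = Real.exp (4 * x 0) + Real.exp (4 * x 1) + Real.exp (4 * x 2)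
      - 5 * (Real.exp (x 0 + x 1) + Real.exp (x 0 + x 2) + Real.exp (x 1 + x 2))
      - 6 * Real.exp (x 0 + x 1 + x 2) + w) :
    (∀ x, f (fun _ => Real.log (5/2)) ≤ f x) ∧
    ((∀ x, 0 ≤ f x) ↔ 1125/16 ≤ w) := by
  have hel : Real.exp (Real.log (5/2)) = 5/2 := Real.exp_log (by norm_num)
  have hdiag : f (fun _ => Real.log (5/2)) = w - 1125/16 := by
    rw [hf]
    simp only [Real.exp_add, ← Real.exp_nat_mul]
    rw [show ((4:ℝ) * Real.log (5/2)) = ((4:ℕ):ℝ) * Real.log (5/2) by norm_num,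
      Real.exp_nat_mul, hel]
    ring
  have hlow : ∀ x, w - 1125/16 ≤ f x := by
    intro x
    rw [hf]
    have h0 := Real.exp_pos (x 0)
    have h1 := Real.exp_pos (x 1)
    have h2 := Real.exp_pos (x 2)
    have e0 : Real.exp (4 * x 0) = Real.exp (x 0) ^ 4 := by
      rw [show (4:ℝ) * x 0 = ((4:ℕ):ℝ) * x 0 by norm_num, Real.exp_nat_mul]
    have e1 : Real.exp (4 * x 1) = Real.exp (x 1) ^ 4 := by
      rw [show (4:ℝ) * x 1 = ((4:ℕ):ℝ) * x 1 by norm_num, Real.exp_nat_mul]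
    have e2 : Real.exp (4 * x 2) = Real.exp (x 2) ^ 4 := by
      rw [show (4:ℝ) * x 2 = ((4:ℕ):ℝ) * x 2 by norm_num, Real.exp_nat_mul]
    rw [e0, e1, e2, Real.exp_add, Real.exp_add, Real.exp_add, Real.exp_add, Real.exp_add]
    have := key18 (Real.exp (x 0)) (Real.exp (x 1)) (Real.exp (x 2)) h0 h1 h2
    linarith
  refine ⟨fun x => by rw [hdiag]; exact hlow x, ?_, fun hw x => by linarith [hlow x]⟩
  intro h
  have := h (fun _ => Real.log (5/2))
  rw [hdiag] at this
  linarith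
end

section
/- Let f(x) = 4e^x − 4e^{2x} + e^{3x} + 4e^{−x} − 4e^{−2x} + e^{−3x} and define g(x,y) = f(x − y) on ℝ². Then g is an S₂-invariant SAGE signomial (g ∈ C_SAGE(T) for T = {(1,−1),(2,−2),(3,−3),(−1,1),(−2,2),(−3,3)}), g attains its global infimum over ℝ², and every global minimizer (x,y) of g satisfies x ≠ y; i.e., g is a symmetric SAGE signomial none of whose minimizers lies on the diagonal. -/
open Finset

section Aux19

private lemma exp2' (s : ℝ) : Real.exp (2*s) = Real.exp s ^ 2 := by
  rw [two_mul, Real.exp_add]; ring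

private lemma exp3' (s : ℝ) : Real.exp (3*s) = Real.exp s ^ 3 := by
  rw [show (3:ℝ)*s = s + s + s by ring, Real.exp_add, Real.exp_add]; ring

private lemma age_nonneg' (s : ℝ) :
    0 ≤ 4*Real.exp s - 4*Real.exp (2*s) + Real.exp (3*s) := by
  rw [exp2', exp3']
  nlinarith [Real.exp_pos s, sq_nonneg (Real.exp s - 2),
    mul_nonneg (Real.exp_pos s).le (sq_nonneg (Real.exp s - 2))]

private lemma vne' {a b c d : ℝ} (h : a ≠ b) : ![a,c] ≠ ![b,d] :=
  fun he => h (congrFun he 0)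

private lemma hdotp (a b : ℝ) (x : Fin 2 → ℝ) : dotp ![a,b] x = a * x 0 + b * x 1 := by
  simp [dotp, Fin.sum_univ_two]

private noncomputable def F19 (s : ℝ) : ℝ :=
  4*Real.exp s - 4*Real.exp (2*s) + Real.exp (3*s)
  + 4*Real.exp (-s) - 4*Real.exp (2*(-s)) + Real.exp (3*(-s))

private lemma hrep19 (s : ℝ) : F19 s = Real.exp s * (Real.exp s - 2)^2
    + Real.exp (-s) * (Real.exp (-s) - 2)^2 := by
  simp only [F19, exp2', exp3']; ring

private lemma F19_zero : F19 0 = 2 := by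
  simp [hrep19]; norm_num

private lemma F19_log2 : F19 (Real.log 2) = 9/8 := by
  rw [hrep19, Real.exp_log (by norm_num : (0:ℝ) < 2), Real.exp_neg,
    Real.exp_log (by norm_num : (0:ℝ) < 2)]
  norm_num

private lemma F19_min : ∃ m : ℝ, ∀ s, F19 m ≤ F19 s := by
  have hc : Continuous F19 := by unfold F19; continuity
  obtain ⟨m, hm, hmin⟩ := isCompact_Icc.exists_isMinOn
    (Set.nonempty_Icc.mpr (by norm_num : (-2:ℝ) ≤ 2)) hc.continuousOn
  refine ⟨m, fun s => ?_⟩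
  by_cases hs : s ∈ Set.Icc (-2:ℝ) 2
  · exact hmin hs
  · have h0 : F19 m ≤ F19 0 := hmin (by norm_num)
    rw [F19_zero] at h0
    have : 2 ≤ F19 s := by
      rw [hrep19]
      rw [Set.mem_Icc, not_and_or, not_le, not_le] at hs
      rcases hs with h1 | h1
      · have ht : 3 ≤ Real.exp (-s) := by
          have := Real.add_one_le_exp (-s); linarith
        nlinarith [mul_nonneg (Real.exp_pos s).le (sq_nonneg (Real.exp s - 2))]
      · have ht : 3 ≤ Real.exp s := by
          have := Real.add_one_le_exp s; linarith
        nlinarith [mul_nonneg (Real.exp_pos (-s)).le (sq_nonneg (Real.exp (-s) - 2))]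
    linarith

private lemma isAGE_zero' {n : ℕ} (A : Finset (Fin n → ℝ)) (β : Fin n → ℝ) :
    IsAGE A β (fun _ => 0) := ⟨fun _ => 0, by simp, by simp, by simp⟩

private lemma isAGE_h' (T' : Finset (Fin 2 → ℝ)) (u1 u2 u3 : Fin 2 → ℝ)
    (h1 : u1 ∈ T'.erase u2) (h3 : u3 ∈ T'.erase u2) (h13 : u1 ≠ u3)
    (hnn : ∀ x, 0 ≤ 4*Real.exp (dotp u1 x) - 4*Real.exp (dotp u2 x) + Real.exp (dotp u3 x)) :
    IsAGE (T'.erase u2) u2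
      (fun x => 4*Real.exp (dotp u1 x) - 4*Real.exp (dotp u2 x) + Real.exp (dotp u3 x)) := by
  classical
  have h21 : u2 ≠ u1 := fun h => (Finset.ne_of_mem_erase h1) h.symm
  have h23 : u2 ≠ u3 := fun h => (Finset.ne_of_mem_erase h3) h.symm
  refine ⟨fun v => if v = u1 then 4 else if v = u3 then 1 else if v = u2 then -4 else 0,
    ?_, ?_, hnn⟩
  · intro α hα
    have hne : α ≠ u2 := Finset.ne_of_mem_erase hα
    dsimp only
    split_ifs <;> first
      | norm_num
      | exact absurd (by assumption) hne
  · intro x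
    have hsum : ∑ α ∈ T'.erase u2,
        (if α = u1 then (4:ℝ) else if α = u3 then 1 else if α = u2 then -4 else 0)
          * Real.exp (dotp α x)
        = 4 * Real.exp (dotp u1 x) + Real.exp (dotp u3 x) := by
      have step : ∀ α ∈ T'.erase u2,
          (if α = u1 then (4:ℝ) else if α = u3 then 1 else if α = u2 then -4 else 0)
            * Real.exp (dotp α x)
          = (if α = u1 then 4 * Real.exp (dotp u1 x) else 0)
            + (if α = u3 then Real.exp (dotp u3 x) else 0) := by
        intro α hα
        have hne : α ≠ u2 := Finset.ne_of_mem_erase hα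
        by_cases e1 : α = u1
        · subst e1; simp [h13]
        · by_cases e3 : α = u3
          · subst e3; simp [Ne.symm h13]
          · simp [e1, e3, hne]
      rw [Finset.sum_congr rfl step, Finset.sum_add_distrib,
        Finset.sum_ite_eq' _ u1, Finset.sum_ite_eq' _ u3, if_pos h1, if_pos h3]
    simp only [hsum, if_neg h21, if_neg h23, if_pos rfl, if_true, eq_self_iff_true]
    ring

private lemma fin2' (i : Fin 2) : i = 0 ∨ i = 1 := by omega

end Aux19

/-- A symmetric SAGE signomial whose minimizers all lie outside the diagonal:
`g(x,y) = f(x-y)` for `f(s) = 4eˢ - 4e^{2s} + e^{3s} + 4e^{-s} - 4e^{-2s} + e^{-3s}`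
is S₂-invariant and SAGE, attains its global infimum, and every global minimizer
`(x,y)` satisfies `x ≠ y`. -/
theorem stmt19 (g : (Fin 2 → ℝ) → ℝ)
    (hg : ∀ p, g p = 4 * Real.exp (p 0 - p 1) - 4 * Real.exp (2*(p 0 - p 1))
      + Real.exp (3*(p 0 - p 1)) + 4 * Real.exp (p 1 - p 0)
      - 4 * Real.exp (2*(p 1 - p 0)) + Real.exp (3*(p 1 - p 0)))
    (T : Finset (Fin 2 → ℝ))
    (hT : T = {![1,-1], ![2,-2], ![3,-3], ![-1,1], ![-2,2], ![-3,3]}) :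
    IsSAGE T g ∧
    (∀ σ : Equiv.Perm (Fin 2), ∀ p, g (permAct σ p) = g p) ∧
    (∃ p : Fin 2 → ℝ, ∀ q, g p ≤ g q) ∧
    (∀ p : Fin 2 → ℝ, (∀ q, g p ≤ g q) → p 0 ≠ p 1) := by
  classical
  subst hT
  have hgF : ∀ p : Fin 2 → ℝ, g p = F19 (p 0 - p 1) := by
    intro p
    rw [hg, show p 1 - p 0 = -(p 0 - p 1) by ring]
    rfl
  have hnn1 : ∀ x : Fin 2 → ℝ, 0 ≤ 4*Real.exp (dotp ![1,-1] x)
      - 4*Real.exp (dotp ![2,-2] x) + Real.exp (dotp ![3,-3] x) := by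
    intro x
    rw [hdotp, hdotp, hdotp,
      show (1:ℝ) * x 0 + -1 * x 1 = x 0 - x 1 by ring,
      show (2:ℝ) * x 0 + -2 * x 1 = 2*(x 0 - x 1) by ring,
      show (3:ℝ) * x 0 + -3 * x 1 = 3*(x 0 - x 1) by ring]
    exact age_nonneg' _
  have hnn2 : ∀ x : Fin 2 → ℝ, 0 ≤ 4*Real.exp (dotp ![-1,1] x)
      - 4*Real.exp (dotp ![-2,2] x) + Real.exp (dotp ![-3,3] x) := by
    intro x
    rw [hdotp, hdotp, hdotp,
      show (-1:ℝ) * x 0 + 1 * x 1 = x 1 - x 0 by ring,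
      show (-2:ℝ) * x 0 + 2 * x 1 = 2*(x 1 - x 0) by ring,
      show (-3:ℝ) * x 0 + 3 * x 1 = 3*(x 1 - x 0) by ring]
    exact age_nonneg' _
  refine ⟨?_, ?_, ?_, ?_⟩
  · -- IsSAGE
    set h1f : (Fin 2 → ℝ) → ℝ := fun x => 4*Real.exp (dotp ![1,-1] x)
      - 4*Real.exp (dotp ![2,-2] x) + Real.exp (dotp ![3,-3] x) with hh1
    set h2f : (Fin 2 → ℝ) → ℝ := fun x => 4*Real.exp (dotp ![-1,1] x)
      - 4*Real.exp (dotp ![-2,2] x) + Real.exp (dotp ![-3,3] x) with hh2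
    set G : (Fin 2 → ℝ) → ((Fin 2 → ℝ) → ℝ) := fun β =>
      if β = ![2,-2] then h1f else if β = ![(-2:ℝ),2] then h2f else fun _ => 0 with hG
    refine ⟨G, ?_, ?_⟩
    · intro β hβ
      by_cases e2 : β = ![2,-2]
      · subst e2
        have : G ![2,-2] = h1f := by rw [hG]; simp
        rw [this]
        exact isAGE_h' _ _ _ _
          (Finset.mem_erase.mpr ⟨vne' (by norm_num), by simp⟩)
          (Finset.mem_erase.mpr ⟨vne' (by norm_num), by simp⟩)
          (vne' (by norm_num)) hnn1
      · by_cases e2' : β = ![(-2:ℝ),2]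
        · subst e2'
          have : G ![(-2:ℝ),2] = h2f := by
            rw [hG]; simp [e2]
          rw [this]
          exact isAGE_h' _ _ _ _
            (Finset.mem_erase.mpr ⟨vne' (by norm_num), by simp⟩)
            (Finset.mem_erase.mpr ⟨vne' (by norm_num), by simp⟩)
            (vne' (by norm_num)) hnn2
        · have : G β = fun _ => 0 := by
            rw [hG]; simp only [if_neg e2, if_neg e2']
          rw [this]
          exact isAGE_zero' _ _
    · intro x
      have step : ∀ β ∈ ({![1,-1], ![2,-2], ![3,-3], ![-1,1], ![-2,2], ![-3,3]} :
          Finset (Fin 2 → ℝ)),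
          G β x = (if β = ![2,-2] then h1f x else 0)
            + (if β = ![(-2:ℝ),2] then h2f x else 0) := by
        intro β _
        by_cases e : β = ![2,-2]
        · subst e
          have h22 : (![2,-2] : Fin 2 → ℝ) ≠ ![(-2:ℝ),2] := vne' (by norm_num)
          simp [hG, h22]
        · by_cases e' : β = ![(-2:ℝ),2]
          · subst e'
            simp [hG, e]
          · simp [hG, e, e']
      rw [Finset.sum_congr rfl step, Finset.sum_add_distrib,
        Finset.sum_ite_eq' _ (![2,-2] : Fin 2 → ℝ),
        Finset.sum_ite_eq' _ (![(-2:ℝ),2] : Fin 2 → ℝ),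
        if_pos (by simp : (![2,-2] : Fin 2 → ℝ) ∈ _),
        if_pos (by simp : (![(-2:ℝ),2] : Fin 2 → ℝ) ∈ _)]
      rw [hg, hh1, hh2]
      simp only [hdotp]
      rw [show (1:ℝ) * x 0 + -1 * x 1 = x 0 - x 1 by ring,
        show (2:ℝ) * x 0 + -2 * x 1 = 2*(x 0 - x 1) by ring,
        show (3:ℝ) * x 0 + -3 * x 1 = 3*(x 0 - x 1) by ring,
        show (-1:ℝ) * x 0 + 1 * x 1 = x 1 - x 0 by ring,
        show (-2:ℝ) * x 0 + 2 * x 1 = 2*(x 1 - x 0) by ring,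
        show (-3:ℝ) * x 0 + 3 * x 1 = 3*(x 1 - x 0) by ring]
      ring
  · -- invariance
    intro σ p
    rcases fin2' (σ⁻¹ 0) with h0 | h0
    · have h1 : σ⁻¹ 1 = 1 := by
        rcases fin2' (σ⁻¹ 1) with h | h
        · exact absurd (Equiv.injective σ⁻¹ (h.trans h0.symm)) (by decide)
        · exact h
      rw [hg, hg]
      simp [permAct, h0, h1]
    · have h1 : σ⁻¹ 1 = 0 := by
        rcases fin2' (σ⁻¹ 1) with h | h
        · exact h
        · exact absurd (Equiv.injective σ⁻¹ (h.trans h0.symm)) (by decide)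
      rw [hg, hg]
      simp only [permAct, h0, h1]
      ring
  · -- existence of minimizer
    obtain ⟨m, hm⟩ := F19_min
    refine ⟨![m, 0], fun q => ?_⟩
    rw [hgF, hgF]
    simpa using hm (q 0 - q 1)
  · -- no minimizer on diagonal
    intro p hp heq
    have h2 := hp ![Real.log 2, 0]
    rw [hgF, hgF] at h2
    have h3 : F19 0 ≤ F19 (Real.log 2) := by simpa [heq] using h2
    rw [F19_zero, F19_log2] at h3
    norm_num at h3
end
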